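/- arXiv:2006.11786 — 5 statements merged into one kernel-verified Lean document; each statement's English description precedes it below -/
import Mathlib

section
/- The reduced coproduct Δ' (Δ minus the primitive part x ⊗ ∅ + ∅ ⊗ x) on ℂ(P_dis(Ξ_A)) is conilpotent: for every element U ∪ {Iᵢ} of Ξ_A there exists a positive integer m with (Δ')^m (U ∪ {Iᵢ}) = 0. -/
open scoped Classical

namespace SetHopf

/-- Basis elements: families of pairs `(Iᵢ, Jᵢ)` of a block `Iᵢ ⊆ A` together with its
collapsed classes `Jᵢ ⊆ P(A)` — the elements of `P_dis(Ξ_A)` (with `Ξ_A` embedded as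
singleton families). -/
abbrev El (α : Type*) := Finset (Finset α × Finset (Finset α))

variable {α : Type*} [Fintype α] [DecidableEq α]

/-- Reversion map: union of a family of subsets. -/
def R (S : Finset (Finset α)) : Finset α := S.sup id

/-- `x` is a genuine element of `P_dis(Ξ_A)`. -/
def isEl (x : El α) : Prop :=
  (∀ p ∈ x, ∀ q ∈ x, p ≠ q → Disjoint (p.1 ∪ R p.2) (q.1 ∪ R q.2)) ∧
  (∀ p ∈ x, Disjoint p.1 (R p.2)) ∧
  (∀ p ∈ x, ∀ s ∈ p.2, ∀ t ∈ p.2, s ≠ t → Disjoint s t)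

/-- Quotient of one block by a sub-element, with the reversion `R₁` applied (induced
quotient): `ind{(Iᵢ ∪ Jᵢ)/(K_λ ∪ L_λ)} = (Iᵢ \ K) ∪ (Jᵢ \ L) ∪ {K_λ ∪ R(L_λ)}`. -/
def blockQuot (b : Finset α × Finset (Finset α)) (y : El α) :
    Finset α × Finset (Finset α) :=
  (b.1 \ (y.filter (fun p => p.1 ⊆ b.1 ∧ p.2 ⊆ b.2)).sup Prod.fst,
    (b.2 \ (y.filter (fun p => p.1 ⊆ b.1 ∧ p.2 ⊆ b.2)).sup Prod.snd) ∪
      (y.filter (fun p => p.1 ⊆ b.1 ∧ p.2 ⊆ b.2)).image (fun p => p.1 ∪ R p.2))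

/-- The induced quotient `ind{x/(K_λ ∪ L_λ)}`, computed blockwise. -/
def quotEl (x y : El α) : El α := x.image (fun b => blockQuot b y)

/-- Admissible subpartitions, as in Definition 3.1. -/
def admissible (x y : El α) : Prop :=
  isEl y ∧ y.Nonempty ∧
  (∀ p ∈ y, ∃ b ∈ x, p.1 ⊆ b.1 ∧ p.2 ⊆ b.2 ∧ p.1 ≠ b.1 ∧ p.2 ≠ b.2) ∧
  y.sup Prod.snd = x.sup Prod.snd

/-- Structure coefficients of the reduced coproduct `Δ'` (the coproduct without the
primitive part `x⊗∅ + ∅⊗x`). -/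
noncomputable def delta' (x : El α) (p : El α × El α) : ℂ :=
  if admissible x p.1 ∧ p.2 = quotEl x p.1 then 1 else 0

/-- Coefficients of the iterated reduced coproduct
`(Δ')^m = (Δ'⊗id⊗⋯⊗id)(Δ')^{m-1}`: `deltaPow m x l` is the coefficient of the
basis tensor indexed by the list `l` (of length `m+1`) in `(Δ')^m x`. -/
noncomputable def deltaPow : ℕ → El α → List (El α) → ℂ
  | 0, x, l => if l = [x] then 1 else 0
  | m + 1, x, l =>
    match l with
    | y0 :: y1 :: rest => ∑ u : El α, delta' u (y0, y1) * deltaPow m x (u :: rest)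
    | _ => 0

/-- An element has fewer than `weightBase α` blocks, so in `weight` one block outweighs any
family of blocks of strictly smaller size. -/
def weightBase (α : Type*) [Fintype α] : ℕ := Fintype.card (Finset α × Finset (Finset α)) + 1

def weight (x : El α) : ℕ := ∑ b ∈ x, weightBase α ^ b.1.card

theorem sum_pow_lt_sum_pow_of_forall_exists_lt {ι κ : Type*} {s : Finset ι}
    {t : Finset κ} {f : ι → ℕ} {g : κ → ℕ} {C : ℕ} (hsC : s.card < C) (hs : s.Nonempty)
    (hdom : ∀ i ∈ s, ∃ j ∈ t, f i < g j) :
    ∑ i ∈ s, C ^ f i < ∑ j ∈ t, C ^ g j := by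
  obtain ⟨i₀, hi₀⟩ := hs
  obtain ⟨j₀, hj₀, -⟩ := hdom i₀ hi₀
  obtain ⟨j, hj, hmax⟩ := t.exists_max_image g ⟨j₀, hj₀⟩
  have hlt : ∀ i ∈ s, f i < g j := fun i hi => by
    obtain ⟨k, hk, hik⟩ := hdom i hi
    exact hik.trans_le (hmax k hk)
  have hf : ∀ i ∈ s, C ^ f i ≤ C ^ (g j - 1) := fun i hi =>
    Nat.pow_le_pow_right (by omega) (Nat.le_sub_one_of_lt (hlt i hi))
  have hgj : 0 < g j := (Nat.zero_le _).trans_lt (hlt i₀ hi₀)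
  calc ∑ i ∈ s, C ^ f i ≤ s.card * C ^ (g j - 1) := by
        simpa using Finset.sum_le_card_nsmul s _ _ hf
    _ < C * C ^ (g j - 1) := Nat.mul_lt_mul_of_pos_right hsC (Nat.pow_pos (by omega))
    _ = C ^ g j := by rw [← pow_succ', Nat.sub_add_cancel hgj]
    _ ≤ ∑ j ∈ t, C ^ g j :=
      Finset.single_le_sum (f := fun j => C ^ g j) (fun _ _ => Nat.zero_le _) hj

theorem weight_lt_of_admissible {x y : El α} (h : admissible x y) : weight y < weight x := by
  obtain ⟨-, hy, hdom, -⟩ := h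
  refine sum_pow_lt_sum_pow_of_forall_exists_lt
    (Nat.lt_succ_of_le (Finset.card_le_univ y)) hy fun p hp => ?_
  obtain ⟨b, hb, h₁, -, hne₁, -⟩ := hdom p hp
  exact ⟨b, hb, Finset.card_lt_card (h₁.ssubset_of_ne hne₁)⟩

omit [Fintype α] in
theorem admissible_of_delta'_ne_zero {x : El α} {p : El α × El α} (h : delta' x p ≠ 0) :
    admissible x p.1 :=
  (ite_ne_right_iff.mp h).1.1

/-- A nonzero coefficient of `(Δ')^m x` comes from a chain of `m` admissible subpartitions
starting at `x`, along which the weight drops at every step. -/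
theorem exists_weight_add_le_of_deltaPow_ne_zero {m : ℕ} {x : El α} {l : List (El α)}
    (h : deltaPow m x l ≠ 0) : ∃ y rest, l = y :: rest ∧ weight y + m ≤ weight x := by
  induction m generalizing l with
  | zero =>
    have hl : l = [x] := by
      by_contra hl
      simp [deltaPow, hl] at h
    exact ⟨x, [], hl, le_rfl⟩
  | succ m ih =>
    match l, h with
    | y₀ :: y₁ :: rest, h =>
      obtain ⟨u, -, hu⟩ := Finset.exists_ne_zero_of_sum_ne_zero h
      have hy₀ : weight y₀ < weight u :=
        weight_lt_of_admissible (admissible_of_delta'_ne_zero (left_ne_zero_of_mul hu))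
      obtain ⟨_, _, ⟨⟩, hu_le⟩ := ih (right_ne_zero_of_mul hu)
      exact ⟨y₀, y₁ :: rest, rfl, by omega⟩

theorem deltaPow_eq_zero_of_weight_lt {m : ℕ} {x : El α} (hm : weight x < m)
    (l : List (El α)) : deltaPow m x l = 0 := by
  by_contra h
  obtain ⟨_, _, -, hle⟩ := exists_weight_add_le_of_deltaPow_ne_zero h
  omega

theorem reduced_coproduct_conilpotent_general (U : Finset α) (S : Finset (Finset α)) :
    ∃ m : ℕ, 0 < m ∧ ∀ l : List (El α), deltaPow m ({(U, S)} : El α) l = 0 :=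
  ⟨_, Nat.succ_pos _, deltaPow_eq_zero_of_weight_lt (Nat.lt_succ_self _)⟩

/-- the reduced coproduct is conilpotent: for every element
`U ∪ {Iᵢ}` of `Ξ_A` there is a positive integer `m` with `(Δ')^m (U ∪ {Iᵢ}) = 0`,
i.e. all coefficients of `(Δ')^m` applied to it vanish. -/
theorem reduced_coproduct_conilpotent (U : Finset α) (S : Finset (Finset α))
    (hUS : Disjoint U (R S))
    (hS : ∀ s ∈ S, ∀ t ∈ S, s ≠ t → Disjoint s t) :
    ∃ m : ℕ, 0 < m ∧ ∀ l : List (El α), deltaPow m ({(U, S)} : El α) l = 0 :=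
  reduced_coproduct_conilpotent_general U S

end SetHopf
end

section
/- Let F be a primary forest on a finite set A and let (V,(V_μ)), (W,(W_ν)) ∈ A_F be two factorisations, and (I,(Iᵢ)) ∈ A_F with (I,(Iᵢ)) ⊆ (V,(V_μ)) and (I,(Iᵢ)) ⊆ (W,(W_ν)). Then quotienting commutes with the semilattice join: ((V,(V_μ)) ∨ (W,(W_ν)))/(I,(Iᵢ)) = ((V,(V_μ))/(I,(Iᵢ))) ∨ ((W,(W_ν))/(I,(Iᵢ))). -/
/-- A forest in `A`: a family of finite subsets containing `∅` such that any two members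
are disjoint or nested. -/
def IsForest {A : Type*} (F : Set (Set A)) : Prop :=
  ∅ ∈ F ∧ (∀ U ∈ F, U.Finite) ∧ ∀ I ∈ F, ∀ J ∈ F, I ∩ J = ∅ ∨ I ⊆ J ∨ J ⊆ I

/-- A forest is primary if no member is the disjoint union of two or more other members. -/
def IsPrimary {A : Type*} (F : Set (Set A)) : Prop :=
  ∀ U ∈ F, ∀ G : Set (Set A), G ⊆ F → U ∉ G → G.Pairwise Disjoint →
    2 ≤ G.ncard → ⋃₀ G ≠ U

/-- Membership in `A_F`: a factorisation identified with its family of blocks. -/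
def memAF {A : Type*} (F G : Set (Set A)) : Prop :=
  G ⊆ F ∧ G.Finite ∧ (∀ S ∈ G, S.Nonempty) ∧ G.Pairwise Disjoint

/-- Join of factorisations: the maximal blocks of the union of the block families. -/
def fjoin {A : Type*} (G H : Set (Set A)) : Set (Set A) :=
  {S | S ∈ G ∪ H ∧ ∀ T ∈ G ∪ H, S ⊆ T → S = T}

/-- Order on factorisations: every block of `G` lies in a block of `H`. -/
def fle {A : Type*} (G H : Set (Set A)) : Prop := ∀ S ∈ G, ∃ T ∈ H, S ⊆ T

/-- Quotient of the factorisation `G` by the factorisation `I ⊆ G`: each block `V` of `G`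
becomes the pair `(V \ ⋃₀I, {S ∈ I | S ⊆ V})`. -/
def qfact {A : Type*} (G I : Set (Set A)) : Set (Set A × Set (Set A)) :=
  (fun V => (V \ ⋃₀ I, {S | S ∈ I ∧ S ⊆ V})) '' G

/-- Underlying block of a quotient pair, via the reversion map. -/
def underly {A : Type*} (p : Set A × Set (Set A)) : Set A := p.1 ∪ ⋃₀ p.2

/-- The collapsed classes contributing to the join block with underlying set
`underly p`: the maximal collapsed classes of all pairs whose underlying block lies
inside it. -/
def collapsedIn {A : Type*} (P Q : Set (Set A × Set (Set A)))
    (p : Set A × Set (Set A)) : Set (Set A) :=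
  {S | (∃ r ∈ P ∪ Q, underly r ⊆ underly p ∧ S ∈ r.2) ∧
    ∀ S', (∃ r ∈ P ∪ Q, underly r ⊆ underly p ∧ S' ∈ r.2) → S ⊆ S' → S = S'}

/-- Join of two quotient factorisations: keep the pairs with maximal underlying block,
merging the collapsed classes of all pairs lying inside it. -/
def qjoin {A : Type*} (P Q : Set (Set A × Set (Set A))) : Set (Set A × Set (Set A)) :=
  {q | ∃ p ∈ P ∪ Q, (∀ r ∈ P ∪ Q, underly p ⊆ underly r → underly p = underly r) ∧
    q = (underly p \ ⋃₀ collapsedIn P Q p, collapsedIn P Q p)}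

/-! Every block `S` of `I` is either inside a block `V` of `G ∨ H` or disjoint from it
(forest property, plus antichain-ness of `G` and `H` to exclude `V ⊊ S`). Hence the
quotient map `V ↦ (V \ ⋃₀ I, {S ∈ I | S ⊆ V})` is inverted by `underly`, so it transports
the maximal blocks of `G ∪ H` to the pairs with maximal underlying block, and, `I` being an
antichain, the collapsed classes merged into the join pair over `V` are exactly the blocks
of `I` inside `V`. -/

open Set

section

variable {A : Type*} {F G I : Set (Set A)}

theorem memAF.isAntichain (hG : memAF F G) : IsAntichain (· ⊆ ·) G := by
  intro S hS T hT hne hST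
  obtain ⟨x, hx⟩ := hG.2.2.1 S hS
  exact disjoint_left.mp (hG.2.2.2 hS hT hne) hx (hST hx)

theorem subset_or_disjoint_of_fle (hF : IsForest F) (hG : memAF F G) (hIF : I ⊆ F)
    (hIG : fle I G) {S V : Set A} (hS : S ∈ I) (hV : V ∈ G) : S ⊆ V ∨ Disjoint S V := by
  rcases hF.2.2 S (hIF hS) V (hG.1 hV) with hdis | hSV | hVS
  · exact Or.inr (disjoint_iff_inter_eq_empty.mpr hdis)
  · exact Or.inl hSV
  · obtain ⟨T, hT, hST⟩ := hIG S hS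
    have hVT : V = T := hG.isAntichain.eq hV hT (hVS.trans hST)
    exact Or.inl (hVT ▸ hST)

def qblock (I : Set (Set A)) (V : Set A) : Set A × Set (Set A) :=
  (V \ ⋃₀ I, {S | S ∈ I ∧ S ⊆ V})

theorem qfact_eq_image_qblock : qfact G I = qblock I '' G := rfl

variable {V : Set A}

theorem sUnion_subsets_eq_inter (h : ∀ S ∈ I, S ⊆ V ∨ Disjoint S V) :
    ⋃₀ {S | S ∈ I ∧ S ⊆ V} = V ∩ ⋃₀ I := by
  ext x
  simp only [mem_sUnion, mem_ofPred_eq, mem_inter_iff]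
  constructor
  · rintro ⟨S, ⟨hS, hSV⟩, hx⟩
    exact ⟨hSV hx, S, hS, hx⟩
  · rintro ⟨hxV, S, hS, hx⟩
    exact ⟨S, ⟨hS, (h S hS).resolve_right fun hd => disjoint_left.mp hd hx hxV⟩, hx⟩

theorem underly_qblock (h : ∀ S ∈ I, S ⊆ V ∨ Disjoint S V) : underly (qblock I V) = V := by
  rw [underly, qblock, sUnion_subsets_eq_inter h, sdiff_union_inter]

theorem diff_sUnion_subsets (h : ∀ S ∈ I, S ⊆ V ∨ Disjoint S V) :
    V \ ⋃₀ {S | S ∈ I ∧ S ⊆ V} = V \ ⋃₀ I := by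
  rw [sUnion_subsets_eq_inter h, sdiff_self_inter]

variable {H : Set (Set A)}

theorem collapsedIn_qblock (hI : IsAntichain (· ⊆ ·) I)
    (hK : ∀ W ∈ G ∪ H, ∀ S ∈ I, S ⊆ W ∨ Disjoint S W) (hV : V ∈ G ∪ H) :
    collapsedIn (qblock I '' G) (qblock I '' H) (qblock I V) = {S | S ∈ I ∧ S ⊆ V} := by
  have hcontrib : ∀ S, (∃ r ∈ qblock I '' G ∪ qblock I '' H,
      underly r ⊆ underly (qblock I V) ∧ S ∈ r.2) ↔ S ∈ I ∧ S ⊆ V := by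
    intro S
    rw [← image_union, underly_qblock (hK V hV)]
    constructor
    · rintro ⟨_, ⟨W, hW, rfl⟩, hWV, hS, hSW⟩
      rw [underly_qblock (hK W hW)] at hWV
      exact ⟨hS, hSW.trans hWV⟩
    · intro hS
      exact ⟨qblock I V, mem_image_of_mem _ hV, (underly_qblock (hK V hV)).subset, hS⟩
  ext S
  simp only [collapsedIn, mem_ofPred_eq, hcontrib]
  exact ⟨And.left, fun hS => ⟨hS, fun S' hS' hSS' => hI.eq hS.1 hS'.1 hSS'⟩⟩

theorem qjoin_image_qblock (hI : IsAntichain (· ⊆ ·) I)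
    (hK : ∀ W ∈ G ∪ H, ∀ S ∈ I, S ⊆ W ∨ Disjoint S W) :
    qjoin (qblock I '' G) (qblock I '' H) = qblock I '' fjoin G H := by
  have hund : ∀ W ∈ G ∪ H, underly (qblock I W) = W := fun W hW => underly_qblock (hK W hW)
  have hpair : ∀ W ∈ G ∪ H, (underly (qblock I W) \ ⋃₀ collapsedIn (qblock I '' G)
      (qblock I '' H) (qblock I W), collapsedIn (qblock I '' G) (qblock I '' H) (qblock I W))
      = qblock I W := by
    intro W hW
    rw [collapsedIn_qblock hI hK hW, hund W hW, diff_sUnion_subsets (hK W hW), qblock]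
  ext q
  simp only [qjoin, fjoin, ← image_union, mem_image, mem_ofPred_eq, exists_exists_and_eq_and,
    forall_exists_index, and_imp, forall_apply_eq_imp_iff₂]
  constructor
  · rintro ⟨V, hV, hmax, rfl⟩
    refine ⟨V, ⟨hV, fun T hT hVT => ?_⟩, (hpair V hV).symm⟩
    simpa only [hund V hV, hund T hT] using hmax T hT (by rwa [hund V hV, hund T hT])
  · rintro ⟨V, ⟨hV, hmax⟩, rfl⟩
    refine ⟨V, hV, fun T hT hVT => ?_, (hpair V hV).symm⟩
    rw [hund V hV, hund T hT] at hVT ⊢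
    exact hmax T hT hVT

end

theorem quotient_commutes_with_join_general {A : Type*} {F : Set (Set A)}
    (hF : IsForest F) (G H I : Set (Set A))
    (hG : memAF F G) (hH : memAF F H) (hI : memAF F I)
    (hIG : fle I G) (hIH : fle I H) :
    qfact (fjoin G H) I = qjoin (qfact G I) (qfact H I) := by
  have hK : ∀ W ∈ G ∪ H, ∀ S ∈ I, S ⊆ W ∨ Disjoint S W := by
    rintro W (hW | hW) S hS
    · exact subset_or_disjoint_of_fle hF hG hI.1 hIG hS hW
    · exact subset_or_disjoint_of_fle hF hH hI.1 hIH hS hW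
  simp only [qfact_eq_image_qblock]
  exact (qjoin_image_qblock hI.isAntichain hK).symm

/-- Proposition 4.2: for a primary forest `F` on a finite set `A` and
factorisations `(V,(V_μ)), (W,(W_ν)) ∈ A_F` both containing `(I,(Iᵢ)) ∈ A_F`, quotienting
commutes with the semilattice join:
`((V,(V_μ)) ∨ (W,(W_ν)))/(I,(Iᵢ)) = ((V,(V_μ))/(I,(Iᵢ))) ∨ ((W,(W_ν))/(I,(Iᵢ)))`. -/
theorem quotient_commutes_with_join {A : Type*} [Fintype A] {F : Set (Set A)}
    (hF : IsForest F) (hP : IsPrimary F) (G H I : Set (Set A))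
    (hG : memAF F G) (hH : memAF F H) (hI : memAF F I)
    (hIG : fle I G) (hIH : fle I H) :
    qfact (fjoin G H) I = qjoin (qfact G I) (qfact H I) :=
  quotient_commutes_with_join_general hF G H I hG hH hI hIG hIH
end

section
/- Let F be a primary forest on A and let (I,(Iᵢ)), (J,(J_j)), (U,(U_λ)), (V,(V_μ)) ∈ A_F with (I,(Iᵢ)) ⊆ (U,(U_λ)) and (J,(J_j)) ⊆ (V,(V_μ)). Then ((U,(U_λ))/(I,(Iᵢ))) ∨ ((V,(V_μ))/(J,(J_j))) = ((U,(U_λ)) ∨ (V,(V_μ))) / ((I,(Iᵢ)) ∨ (J,(J_j))). -/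
/-!
Every pair of `qfact G I` lies over a block of `G`, so the pairs kept in the join of two
quotients are those lying over the maximal blocks `W` of `G ∪ H`, i.e. over the blocks of
`fjoin G H`. In a forest such a `W` is saturated: every block of `G ∪ H` meeting `W` lies in
`W`, and then so does every block of `I ∪ J` meeting `W`, because `I ≤ G` and `J ≤ H`.
Hence the collapsed classes gathered under `W` are the blocks of `I ∪ J` inside `W`, their
maximal ones are the blocks of `fjoin I J` inside `W`, and these cover `W ∩ ⋃₀ fjoin I J`.
-/

section

variable {A : Type*}

def IsSaturated (K : Set (Set A)) (W : Set A) : Prop :=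
  ∀ V ∈ K, (V ∩ W).Nonempty → V ⊆ W

namespace IsSaturated

variable {K L : Set (Set A)} {W : Set A}

lemma mono (hW : IsSaturated K W) (hLK : L ⊆ K) : IsSaturated L W :=
  fun V hV => hW V (hLK hV)

lemma of_fle (hW : IsSaturated K W) (hLK : fle L K) : IsSaturated L W := by
  intro T hT hTW
  obtain ⟨V, hV, hTV⟩ := hLK T hT
  exact hTV.trans (hW V hV (hTW.mono (Set.inter_subset_inter_left W hTV)))

lemma sUnion_sep_eq_inter_sUnion (hW : IsSaturated K W) :
    ⋃₀ {S | S ∈ K ∧ S ⊆ W} = W ∩ ⋃₀ K := by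
  ext x
  constructor
  · rintro ⟨S, ⟨hSK, hSW⟩, hxS⟩
    exact ⟨hSW hxS, S, hSK, hxS⟩
  · rintro ⟨hxW, S, hSK, hxS⟩
    exact ⟨S, ⟨hSK, hW S hSK ⟨x, hxS, hxW⟩⟩, hxS⟩

lemma diff_sUnion_sep (hW : IsSaturated K W) :
    W \ ⋃₀ {S | S ∈ K ∧ S ⊆ W} = W \ ⋃₀ K := by
  rw [hW.sUnion_sep_eq_inter_sUnion, Set.sdiff_self_inter]

lemma maximal_mem_sep_iff (hW : IsSaturated K W) (hK : ∀ S ∈ K, S.Nonempty) {S : Set A} :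
    Maximal (· ∈ {S | S ∈ K ∧ S ⊆ W}) S ↔ Maximal (· ∈ K) S ∧ S ⊆ W := by
  constructor
  · rintro ⟨⟨hSK, hSW⟩, hmax⟩
    refine ⟨⟨hSK, fun T hT hST => hmax ⟨hT, ?_⟩ hST⟩, hSW⟩
    exact hW T hT ((hK S hSK).mono (Set.subset_inter hST hSW))
  · rintro ⟨hS, hSW⟩
    exact hS.and_right hSW

end IsSaturated

lemma isSaturated_of_pairwise_disjoint {G : Set (Set A)} (hGd : G.Pairwise Disjoint)
    {V : Set A} (hV : V ∈ G) : IsSaturated G V := by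
  intro T hT hTV
  by_cases hTeq : T = V
  · exact hTeq.subset
  · exact absurd (hGd hT hV hTeq) (Set.not_disjoint_iff_nonempty_inter.mpr hTV)

lemma IsForest.subset_or_subset {F : Set (Set A)} (hF : IsForest F) {X Y : Set A}
    (hX : X ∈ F) (hY : Y ∈ F) (hXY : (X ∩ Y).Nonempty) : X ⊆ Y ∨ Y ⊆ X :=
  (hF.2.2 X hX Y hY).resolve_left hXY.ne_empty

lemma IsForest.isSaturated_of_maximal {F K : Set (Set A)} (hF : IsForest F) (hKF : K ⊆ F)
    {W : Set A} (hW : Maximal (· ∈ K) W) : IsSaturated K W := by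
  intro V hV hVW
  rcases hF.subset_or_subset (hKF hV) (hKF hW.prop) hVW with hVW' | hWV
  · exact hVW'
  · exact (hW.eq_of_subset hV hWV).ge

section Factorisations

variable {G H I J : Set (Set A)}

lemma mem_fjoin_iff {S : Set A} : S ∈ fjoin G H ↔ Maximal (· ∈ G ∪ H) S :=
  maximal_subset_iff.symm

lemma fjoin_subset_union : fjoin G H ⊆ G ∪ H :=
  fun _ hS => hS.1

lemma fle_union (hIG : fle I G) (hJH : fle J H) : fle (I ∪ J) (G ∪ H) := by
  rintro S (hS | hS)
  · exact (hIG S hS).imp fun _ => And.imp_left Or.inl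
  · exact (hJH S hS).imp fun _ => And.imp_left Or.inr

lemma underly_qfact_block (hGd : G.Pairwise Disjoint) (hIG : fle I G) {V : Set A}
    (hV : V ∈ G) : underly (V \ ⋃₀ I, {S | S ∈ I ∧ S ⊆ V}) = V := by
  rw [underly, ((isSaturated_of_pairwise_disjoint hGd hV).of_fle hIG).sUnion_sep_eq_inter_sUnion,
    Set.sdiff_union_inter]

lemma image_underly_qfact (hGd : G.Pairwise Disjoint) (hIG : fle I G) :
    underly '' qfact G I = G := by
  rw [qfact, Set.image_image, Set.image_congr fun V hV => underly_qfact_block hGd hIG hV,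
    Set.image_id']

lemma exists_mem_qfact_snd_iff (hGd : G.Pairwise Disjoint) (hIG : fle I G)
    (hIne : ∀ S ∈ I, S.Nonempty) {W : Set A} (hW : IsSaturated G W) {S : Set A} :
    (∃ r ∈ qfact G I, underly r ⊆ W ∧ S ∈ r.2) ↔ S ∈ I ∧ S ⊆ W := by
  constructor
  · rintro ⟨_, ⟨V, hV, rfl⟩, hVW, hSI, hSV⟩
    rw [underly_qfact_block hGd hIG hV] at hVW
    exact ⟨hSI, hSV.trans hVW⟩
  · rintro ⟨hSI, hSW⟩
    obtain ⟨V, hV, hSV⟩ := hIG S hSI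
    refine ⟨_, ⟨V, hV, rfl⟩, ?_, hSI, hSV⟩
    rw [underly_qfact_block hGd hIG hV]
    exact hW V hV ((hIne S hSI).mono (Set.subset_inter hSV hSW))

lemma collapsedIn_eq (P Q : Set (Set A × Set (Set A))) (p : Set A × Set (Set A)) :
    collapsedIn P Q p =
      {S | Maximal (· ∈ {S | ∃ r ∈ P ∪ Q, underly r ⊆ underly p ∧ S ∈ r.2}) S} := by
  ext S
  rw [Set.mem_ofPred_eq, maximal_subset_iff]
  rfl

lemma collapsedIn_qfact (hGd : G.Pairwise Disjoint) (hHd : H.Pairwise Disjoint)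
    (hIG : fle I G) (hJH : fle J H) (hIne : ∀ S ∈ I, S.Nonempty) (hJne : ∀ S ∈ J, S.Nonempty)
    {p : Set A × Set (Set A)} (hp : IsSaturated (G ∪ H) (underly p)) :
    collapsedIn (qfact G I) (qfact H J) p = {S | S ∈ fjoin I J ∧ S ⊆ underly p} := by
  have hcand : {S | ∃ r ∈ qfact G I ∪ qfact H J, underly r ⊆ underly p ∧ S ∈ r.2} =
      {S | S ∈ I ∪ J ∧ S ⊆ underly p} := by
    ext S
    simp only [Set.mem_ofPred_eq, Set.mem_union, or_and_right, exists_or,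
      exists_mem_qfact_snd_iff hGd hIG hIne (hp.mono Set.subset_union_left),
      exists_mem_qfact_snd_iff hHd hJH hJne (hp.mono Set.subset_union_right)]
  have hIJne : ∀ S ∈ I ∪ J, S.Nonempty := fun S hS => hS.elim (hIne S) (hJne S)
  ext S
  rw [collapsedIn_eq, hcand, Set.mem_ofPred_eq,
    (hp.of_fle (fle_union hIG hJH)).maximal_mem_sep_iff hIJne, Set.mem_ofPred_eq,
    mem_fjoin_iff]

end Factorisations

lemma mem_fjoin_image_underly_iff {P Q : Set (Set A × Set (Set A))}
    {p : Set A × Set (Set A)} (hp : p ∈ P ∪ Q) :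
    underly p ∈ fjoin (underly '' P) (underly '' Q) ↔
      ∀ r ∈ P ∪ Q, underly p ⊆ underly r → underly p = underly r := by
  simp only [fjoin, ← Set.image_union, Set.mem_ofPred_eq, Set.forall_mem_image,
    Set.mem_image_of_mem underly hp, true_and]

lemma qjoin_eq_image (P Q : Set (Set A × Set (Set A))) :
    qjoin P Q = (fun p => (underly p \ ⋃₀ collapsedIn P Q p, collapsedIn P Q p)) ''
      ((P ∪ Q) ∩ underly ⁻¹' fjoin (underly '' P) (underly '' Q)) := by
  ext q
  constructor
  · rintro ⟨p, hp, hmax, rfl⟩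
    exact ⟨p, ⟨hp, (mem_fjoin_image_underly_iff hp).mpr hmax⟩, rfl⟩
  · rintro ⟨p, ⟨hp, hmax⟩, rfl⟩
    exact ⟨p, hp, (mem_fjoin_image_underly_iff hp).mp hmax, rfl⟩

end

theorem join_of_quotients_eq_quotient_of_joins_general {A : Type*} {F : Set (Set A)}
    (hF : IsForest F) (G H I J : Set (Set A))
    (hG : memAF F G) (hH : memAF F H) (hI : memAF F I) (hJ : memAF F J)
    (hIG : fle I G) (hJH : fle J H) :
    qjoin (qfact G I) (qfact H J) = qfact (fjoin G H) (fjoin I J) := by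
  obtain ⟨hGF, -, -, hGd⟩ := hG
  obtain ⟨hHF, -, -, hHd⟩ := hH
  obtain ⟨-, -, hIne, -⟩ := hI
  obtain ⟨-, -, hJne, -⟩ := hJ
  set quot : Set A → Set A × Set (Set A) :=
    fun V => (V \ ⋃₀ fjoin I J, {S | S ∈ fjoin I J ∧ S ⊆ V})
  have hblock : ∀ p ∈ (qfact G I ∪ qfact H J) ∩ underly ⁻¹' fjoin G H,
      (underly p \ ⋃₀ collapsedIn (qfact G I) (qfact H J) p,
        collapsedIn (qfact G I) (qfact H J) p) = quot (underly p) := by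
    rintro p ⟨-, hp⟩
    have hsat : IsSaturated (G ∪ H) (underly p) :=
      hF.isSaturated_of_maximal (Set.union_subset hGF hHF) (mem_fjoin_iff.mp hp)
    rw [collapsedIn_qfact hGd hHd hIG hJH hIne hJne hsat,
      ((hsat.of_fle (fle_union hIG hJH)).mono fjoin_subset_union).diff_sUnion_sep]
  rw [qjoin_eq_image, image_underly_qfact hGd hIG, image_underly_qfact hHd hJH,
    Set.image_congr hblock, ← Set.image_image quot underly, Set.image_inter_preimage,
    Set.image_union, image_underly_qfact hGd hIG, image_underly_qfact hHd hJH,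
    Set.inter_eq_right.mpr fjoin_subset_union]
  rfl

/-- Corollary 4.2: for factorisations `(I,(Iᵢ)) ⊆ (U,(U_λ))` and
`(J,(J_j)) ⊆ (V,(V_μ))` in `A_F`, the join of quotients is the quotient of joins:
`((U,(U_λ))/(I,(Iᵢ))) ∨ ((V,(V_μ))/(J,(J_j))) = ((U,(U_λ)) ∨ (V,(V_μ))) / ((I,(Iᵢ)) ∨ (J,(J_j)))`. -/
theorem join_of_quotients_eq_quotient_of_joins {A : Type*} {F : Set (Set A)}
    (hF : IsForest F) (hP : IsPrimary F) (G H I J : Set (Set A))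
    (hG : memAF F G) (hH : memAF F H) (hI : memAF F I) (hJ : memAF F J)
    (hIG : fle I G) (hJH : fle J H) :
    qjoin (qfact G I) (qfact H J) = qfact (fjoin G H) (fjoin I J) :=
  join_of_quotients_eq_quotient_of_joins_general hF G H I J hG hH hI hJ hIG hJH
end

section
/- For the coproduct Δ_F on the ℂ-span of the quotient factorisations A_quo of a primary forest F on a finite set A, defined by Δ_F(x) = x⊗∅ + ∅⊗x + Σ over intermediate factorisations, coassociativity holds: (Δ_F ⊗ id)Δ_F = (id ⊗ Δ_F)Δ_F. In particular, for the connected element A itself, Σ over chains (I,(Iᵢ)) ⊆ (J,(J_j)) in A_F of (I,(Iᵢ)) ⊗ ((J,(J_j))/(Iᵢ)) ⊗ (A/(J_j)) computes both (Δ'_F ⊗ id)Δ'_F A and (id ⊗ Δ'_F)Δ'_F A. -/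
open scoped Classical

namespace ForestHopf

variable {A : Type*} [Fintype A] [DecidableEq A]

/-- A forest on the finite set `A` (as a family of `Finset`s): it contains `∅` and the
whole set, and any two members are disjoint or nested. -/
def IsForestF (F : Finset (Finset A)) : Prop :=
  ∅ ∈ F ∧ Finset.univ ∈ F ∧ ∀ I ∈ F, ∀ J ∈ F, I ∩ J = ∅ ∨ I ⊆ J ∨ J ⊆ I

/-- A forest is primary if no member is the disjoint union of two or more other members. -/
def IsPrimaryF (F : Finset (Finset A)) : Prop :=
  ∀ U ∈ F, ∀ G ⊆ F, U ∉ G → (∀ S ∈ G, ∀ T ∈ G, S ≠ T → Disjoint S T) →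
    2 ≤ G.card → G.sup id ≠ U

/-- Membership in `A_F`: a factorisation identified with its (pairwise disjoint, nonempty)
family of blocks, all belonging to `F`. -/
def memAF (F G : Finset (Finset A)) : Prop :=
  G ⊆ F ∧ (∀ S ∈ G, S.Nonempty) ∧ ∀ S ∈ G, ∀ T ∈ G, S ≠ T → Disjoint S T

/-- Order on factorisations: every block of `G` lies in a block of `H`. -/
def fle (G H : Finset (Finset A)) : Prop := ∀ S ∈ G, ∃ T ∈ H, S ⊆ T

/-- Elements of `A_quo`: a quotient `(U,(U_λ))/(I,(Iᵢ))` is encoded as the pair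
`x = (x.1, x.2)` of the factorisation `x.1 = (U,(U_λ))` and the divisor `x.2 = (I,(Iᵢ))`;
bare factorisations correspond to `x.2 = ∅`. -/
abbrev QEl (A : Type*) := Finset (Finset A) × Finset (Finset A)

/-- Structure coefficients of the coproduct `Δ_F`:  `deltaF F x (y, z)` is the coefficient
of `y ⊗ z` in `Δ_F x`.  For `x = (U,(U_λ))/(I,(Iᵢ))`,
`Δ_F x = x⊗∅ + ∅⊗x + Σ_{(I,(Iᵢ)) ⊊ (V,(V_μ)) ⊊ (U,(U_λ))}
  ((V,(V_μ))/(I,(Iᵢ))) ⊗ ((U,(U_λ))/(V,(V_μ)))`. -/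
noncomputable def deltaF (F : Finset (Finset A)) (x : QEl A) (p : QEl A × QEl A) : ℂ :=
  if x = ((∅, ∅) : QEl A) then (if p.1 = x ∧ p.2 = x then 1 else 0)
  else
    (if p.1 = x ∧ p.2 = ((∅, ∅) : QEl A) then 1 else 0) +
    (if p.1 = ((∅, ∅) : QEl A) ∧ p.2 = x then 1 else 0) +
    (if (memAF F p.1.1 ∧ p.1.2 = x.2 ∧ p.2.1 = x.1 ∧ p.2.2 = p.1.1 ∧
          fle x.2 p.1.1 ∧ fle p.1.1 x.1 ∧ p.1.1 ≠ x.2 ∧ p.1.1 ≠ x.1) then 1 else 0)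

/-! Writing `Δ_F x = x ⊗ ∅ + ∅ ⊗ x + Δ'_F x`, the unit terms of the two iterated coproducts
match for any such coproduct whose reduced part never produces `∅`, so coassociativity of `Δ_F`
reduces to that of `Δ'_F`. Both `(Δ'_F ⊗ id) Δ'_F x` and `(id ⊗ Δ'_F) Δ'_F x` are sums over
chains `x.2 < Y < W < x.1` of factorisations: the first picks `W` and then `Y` below it, the
second `Y` and then `W` above it. That these are the same chains follows from transitivity of
`fle` and its antisymmetry on factorisations (nonempty, pairwise disjoint blocks). -/

section CoproductOfReduced

variable {X : Type*} [DecidableEq X]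

def coproductOfReduced (e : X) (r : X → X × X → ℂ) (x : X) (p : X × X) : ℂ :=
  if x = e then (if p = (e, e) then 1 else 0)
  else (if p = (x, e) then 1 else 0) + (if p = (e, x) then 1 else 0) + r x p

def IsCoassociative [Fintype X] (c : X → X × X → ℂ) : Prop :=
  ∀ x y z w, ∑ u, c x (u, w) * c u (y, z) = ∑ u, c x (y, u) * c u (z, w)

variable {e : X} {r : X → X × X → ℂ}

theorem coproductOfReduced_self (p : X × X) :
    coproductOfReduced e r e p = if p = (e, e) then 1 else 0 :=
  if_pos rfl

theorem coproductOfReduced_of_ne {x : X} (hx : x ≠ e) (p : X × X) :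
    coproductOfReduced e r x p =
      (if p = (x, e) then 1 else 0) + (if p = (e, x) then 1 else 0) + r x p :=
  if_neg hx

variable [Fintype X]

theorem sum_coproductOfReduced_mul_left {x : X} (hx : x ≠ e) (w : X) (f : X → ℂ) :
    ∑ u, coproductOfReduced e r x (u, w) * f u =
      (if w = e then f x else 0) + (if w = x then f e else 0) + ∑ u, r x (u, w) * f u := by
  simp [coproductOfReduced_of_ne hx, add_mul, Finset.sum_add_distrib, ite_mul, ite_and]

theorem sum_coproductOfReduced_mul_right {x : X} (hx : x ≠ e) (y : X) (f : X → ℂ) :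
    ∑ u, coproductOfReduced e r x (y, u) * f u =
      (if y = x then f e else 0) + (if y = e then f x else 0) + ∑ u, r x (y, u) * f u := by
  simp [coproductOfReduced_of_ne hx, add_mul, Finset.sum_add_distrib, ite_mul, ite_and]

theorem sum_mul_coproductOfReduced_left (hr : ∀ x q, r x (e, q) = 0) (x y z w : X) :
    ∑ u, r x (u, w) * coproductOfReduced e r u (y, z) =
      (if z = e then r x (y, w) else 0) + (if y = e then r x (z, w) else 0) +
        ∑ u, r x (u, w) * r u (y, z) := by
  have key : ∀ u, r x (u, w) * coproductOfReduced e r u (y, z) =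
      r x (u, w) * ((if y = u ∧ z = e then 1 else 0) + (if y = e ∧ z = u then 1 else 0) +
        r u (y, z)) := by
    intro u
    rcases eq_or_ne u e with rfl | hu
    · simp [hr]
    · simp [coproductOfReduced_of_ne hu]
  simp [key, mul_add, Finset.sum_add_distrib, mul_ite, ite_and]

theorem sum_mul_coproductOfReduced_right (hr : ∀ x p, r x (p, e) = 0) (x y z w : X) :
    ∑ u, r x (y, u) * coproductOfReduced e r u (z, w) =
      (if w = e then r x (y, z) else 0) + (if z = e then r x (y, w) else 0) +
        ∑ u, r x (y, u) * r u (z, w) := by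
  have key : ∀ u, r x (y, u) * coproductOfReduced e r u (z, w) =
      r x (y, u) * ((if z = u ∧ w = e then 1 else 0) + (if z = e ∧ w = u then 1 else 0) +
        r u (z, w)) := by
    intro u
    rcases eq_or_ne u e with rfl | hu
    · simp [hr]
    · simp [coproductOfReduced_of_ne hu]
  simp [key, mul_add, Finset.sum_add_distrib, mul_ite, ite_and]

theorem IsCoassociative.coproductOfReduced (hl : ∀ x q, r x (e, q) = 0)
    (hr : ∀ x p, r x (p, e) = 0) (h : IsCoassociative r) :
    IsCoassociative (coproductOfReduced e r) := by
  intro x y z w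
  rcases eq_or_ne x e with rfl | hx
  · simp only [coproductOfReduced_self, Prod.mk.injEq, and_comm, ite_and, ite_mul, one_mul,
      zero_mul, Finset.sum_ite_irrel, Finset.sum_ite_eq', Finset.mem_univ, ↓reduceIte,
      Finset.sum_const_zero]
    split_ifs <;> rfl
  rw [sum_coproductOfReduced_mul_left hx, sum_coproductOfReduced_mul_right hx,
    sum_mul_coproductOfReduced_left hl, sum_mul_coproductOfReduced_right hr, h x y z w]
  simp only [coproductOfReduced_self, coproductOfReduced_of_ne hx, Prod.mk.injEq]
  split_ifs <;> simp_all

end CoproductOfReduced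

section Order

omit [Fintype A] [DecidableEq A]

theorem fle_trans {G H K : Finset (Finset A)} (hGH : fle G H) (hHK : fle H K) : fle G K := by
  intro S hS
  obtain ⟨T, hT, hST⟩ := hGH S hS
  obtain ⟨T', hT', hTT'⟩ := hHK T hT
  exact ⟨T', hT', hST.trans hTT'⟩

theorem eq_empty_of_fle_empty {G : Finset (Finset A)} (h : fle G ∅) : G = ∅ :=
  Finset.eq_empty_of_forall_notMem fun S hS => by simpa using h S hS

theorem subset_of_fle_of_fle {G H : Finset (Finset A)} (hne : ∀ S ∈ G, S.Nonempty)
    (hdisj : ∀ S ∈ G, ∀ T ∈ G, S ≠ T → Disjoint S T) (hGH : fle G H) (hHG : fle H G) :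
    G ⊆ H := by
  intro S hS
  obtain ⟨T, hT, hST⟩ := hGH S hS
  obtain ⟨S', hS', hTS'⟩ := hHG T hT
  obtain rfl : S = S' := by
    by_contra hSS'
    obtain ⟨a, ha⟩ := hne S hS
    exact Finset.disjoint_left.mp (hdisj S hS S' hS' hSS') ha (hTS' (hST ha))
  rwa [hST.antisymm hTS']

theorem fle_antisymm {F G H : Finset (Finset A)} (hG : memAF F G) (hH : memAF F H)
    (hGH : fle G H) (hHG : fle H G) : G = H :=
  (subset_of_fle_of_fle hG.2.1 hG.2.2 hGH hHG).antisymm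
    (subset_of_fle_of_fle hH.2.1 hH.2.2 hHG hGH)

def StrictBetween (F I V U : Finset (Finset A)) : Prop :=
  memAF F V ∧ fle I V ∧ fle V U ∧ V ≠ I ∧ V ≠ U

theorem StrictBetween.ne_empty {F I V U : Finset (Finset A)} (h : StrictBetween F I V U) :
    V ≠ ∅ := by
  rintro rfl
  exact h.2.2.2.1 (eq_empty_of_fle_empty h.2.1).symm

theorem strictBetween_and_strictBetween_iff {F I Y W U : Finset (Finset A)} :
    StrictBetween F I Y W ∧ StrictBetween F I W U ↔
      StrictBetween F I Y U ∧ StrictBetween F Y W U := by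
  constructor
  · rintro ⟨⟨hY, hIY, hYW, hYI, hYW'⟩, ⟨hW, -, hWU, -, hWU'⟩⟩
    refine ⟨⟨hY, hIY, fle_trans hYW hWU, hYI, ?_⟩, ⟨hW, hYW, hWU, Ne.symm hYW', hWU'⟩⟩
    rintro rfl
    exact hYW' (fle_antisymm hY hW hYW hWU)
  · rintro ⟨⟨hY, hIY, -, hYI, hYU⟩, ⟨hW, hYW, hWU, hWY, hWU'⟩⟩
    refine ⟨⟨hY, hIY, hYW, hYI, Ne.symm hWY⟩, ⟨hW, fle_trans hIY hYW, hWU, ?_, hWU'⟩⟩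
    rintro rfl
    exact hYI (fle_antisymm hY hW hYW hIY)

end Order

section

omit [Fintype A]

/-- `Δ'_F x` is the sum of `(V / x.2) ⊗ (x.1 / V)` over the factorisations `V` strictly between
`x.2` and `x.1`. -/
noncomputable def reducedDeltaF (F : Finset (Finset A)) (x : QEl A) (p : QEl A × QEl A) : ℂ :=
  if p.1.2 = x.2 ∧ p.2 = (x.1, p.1.1) ∧ StrictBetween F x.2 p.1.1 x.1 then 1 else 0

theorem deltaF_eq_coproductOfReduced (F : Finset (Finset A)) :
    deltaF F = coproductOfReduced (∅, ∅) (reducedDeltaF F) := by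
  ext x ⟨y, z⟩
  rcases eq_or_ne x (∅, ∅) with rfl | hx
  · simp [deltaF, coproductOfReduced_self]
  · rw [coproductOfReduced_of_ne hx, deltaF, if_neg hx]
    simp only [reducedDeltaF, StrictBetween, Prod.ext_iff]
    congr 1
    exact if_congr (by tauto) rfl rfl

theorem reducedDeltaF_empty_left (F : Finset (Finset A)) (x q : QEl A) :
    reducedDeltaF F x ((∅, ∅), q) = 0 :=
  if_neg fun h => h.2.2.ne_empty rfl

theorem reducedDeltaF_empty_right (F : Finset (Finset A)) (x p : QEl A) :
    reducedDeltaF F x (p, (∅, ∅)) = 0 :=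
  if_neg fun h => h.2.2.ne_empty (Prod.ext_iff.mp h.2.1).2.symm

end

theorem sum_reducedDeltaF_mul_left (F : Finset (Finset A)) (x w : QEl A) (f : QEl A → ℂ) :
    ∑ u, reducedDeltaF F x (u, w) * f u =
      if w.1 = x.1 ∧ StrictBetween F x.2 w.2 x.1 then f (w.2, x.2) else 0 := by
  rw [Fintype.sum_eq_single (w.2, x.2)]
  · simp [reducedDeltaF, Prod.ext_iff, ite_mul]
  · rintro u hu
    simp only [reducedDeltaF]
    rw [if_neg, zero_mul]
    rintro ⟨h2, hw, -⟩
    exact hu (Prod.ext (Prod.ext_iff.mp hw).2.symm h2)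

theorem sum_reducedDeltaF_mul_right (F : Finset (Finset A)) (x y : QEl A) (f : QEl A → ℂ) :
    ∑ u, reducedDeltaF F x (y, u) * f u =
      if y.2 = x.2 ∧ StrictBetween F x.2 y.1 x.1 then f (x.1, y.1) else 0 := by
  rw [Fintype.sum_eq_single (x.1, y.1)]
  · simp [reducedDeltaF, ite_mul]
  · rintro u hu
    simp only [reducedDeltaF]
    rw [if_neg, zero_mul]
    rintro ⟨-, rfl, -⟩
    exact hu rfl

theorem isCoassociative_reducedDeltaF (F : Finset (Finset A)) :
    IsCoassociative (reducedDeltaF F) := by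
  intro x y z w
  rw [sum_reducedDeltaF_mul_left, sum_reducedDeltaF_mul_right]
  simp only [reducedDeltaF, ← ite_and]
  refine if_congr ?_ rfl rfl
  obtain ⟨U, I⟩ := x
  obtain ⟨Y, I'⟩ := y
  obtain ⟨W, Y'⟩ := z
  obtain ⟨U', W'⟩ := w
  simp only [Prod.mk.injEq]
  constructor
  · rintro ⟨⟨rfl, hW⟩, rfl, ⟨rfl, rfl⟩, hY⟩
    obtain ⟨hY', hW'⟩ := strictBetween_and_strictBetween_iff.mp ⟨hY, hW⟩
    exact ⟨⟨rfl, hY'⟩, rfl, ⟨rfl, rfl⟩, hW'⟩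
  · rintro ⟨⟨rfl, hY⟩, rfl, ⟨rfl, rfl⟩, hW⟩
    obtain ⟨hY', hW'⟩ := strictBetween_and_strictBetween_iff.mpr ⟨hY, hW⟩
    exact ⟨⟨rfl, hW'⟩, rfl, ⟨rfl, rfl⟩, hY'⟩

theorem deltaF_coassoc_general (F : Finset (Finset A)) (x : QEl A)
    (y z w : QEl A) :
    (∑ u : QEl A, deltaF F x (u, w) * deltaF F u (y, z)) =
      (∑ u : QEl A, deltaF F x (y, u) * deltaF F u (z, w)) := by
  rw [deltaF_eq_coproductOfReduced]
  exact (isCoassociative_reducedDeltaF F).coproductOfReduced (reducedDeltaF_empty_left F)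
    (reducedDeltaF_empty_right F) x y z w

/-- Theorem 4.2: the coproduct `Δ_F` on the span of `A_quo` is
coassociative, `(Δ_F ⊗ id)Δ_F = (id ⊗ Δ_F)Δ_F`, stated at the level of structure
coefficients: for any valid `x ∈ A_quo` and any `y, z, w` the coefficient of `y ⊗ z ⊗ w`
is the same on both sides (in particular both sides are computed by the sum over chains
`(I,(Iᵢ)) ⊆ (J,(J_j))` in `A_F`). -/
theorem deltaF_coassoc (F : Finset (Finset A))
    (hF : IsForestF F) (hPr : IsPrimaryF F) (x : QEl A)
    (hx1 : memAF F x.1) (hx2 : memAF F x.2) (hx12 : fle x.2 x.1)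
    (y z w : QEl A) :
    (∑ u : QEl A, deltaF F x (u, w) * deltaF F u (y, z)) =
      (∑ u : QEl A, deltaF F x (y, u) * deltaF F u (z, w)) :=
  deltaF_coassoc_general F x y z w

end ForestHopf
end

section
/- Let M ∈ gl(d,ℂ)₀ (d×d matrices with zero diagonal), and let (Iᵢ) ⊆ (K_λ) be partitions in {1,…,d} (each block of size > 1) with every Iᵢ contained in some K_λ. Setting (J_j) = (K_λ)/(Iᵢ), the quotient matrices satisfy (M/(Iᵢ))/(J_j) = M/(K_λ) and (M/(Iᵢ))_{(J_j)} = M_{(K_λ)}/(Iᵢ). Here M/I is obtained from M by deleting rows/columns in I, adjoining one new row and column indexed by an ideal index whose entries are the sums of the deleted entries (row-sums and column-sums over I against indices outside I), and M_I is the principal submatrix on I. -/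
/-!
An entry of `(M/(Iᵢ))/(J_j)` between two distinct blocks `J, J'` is a sum, over pairs of
blocks of `M/(Iᵢ)` lying in `J` and `J'` (necessarily distinct), of block sums of `M`; since
the blocks lying in `J` tile the corresponding block of `(K_λ)`, the sum regroups into the
entry of `M/(K_λ)`. For the block-diagonal part, two distinct blocks of `M/(Iᵢ)` lie in a
common `J_j` exactly when any of their entries lie in a common `K_λ`, so masking `M` before
or after taking the quotient gives the same matrix.
-/

open scoped Classical

namespace MatQuot

variable {d : ℕ}

/-- Generic quotient (collapsing) of a matrix `N` along a family of blocks `D`: the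
quotient matrix is indexed by the blocks, has zero diagonal, and its off-diagonal entries
are the sums of the entries of `N` between the two blocks. -/
noncomputable def quotQ {ι κ : Type*} (N : Matrix ι ι ℂ) (D : κ → Finset ι) :
    Matrix κ κ ℂ :=
  Matrix.of fun a b => if a = b then 0 else ∑ i ∈ D a, ∑ j ∈ D b, N i j

/-- The block family of the quotient by the partition `I₁,…,I_l`: the index set consists of
the indices lying in no `Iᵢ` (as singleton blocks) together with one ideal index per block
`Iᵢ`. -/
def blkFam {l : ℕ} (I : Fin l → Finset (Fin d)) :
    ({j : Fin d // ∀ i, j ∉ I i} ⊕ Fin l) → Finset (Fin d)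
  | Sum.inl j => {j.1}
  | Sum.inr i => I i

/-- The block-diagonal part `M_{(K)}` of `M` with respect to the partition `(K_λ)`. -/
noncomputable def bdiag (M : Matrix (Fin d) (Fin d) ℂ) {m : ℕ}
    (K : Fin m → Finset (Fin d)) : Matrix (Fin d) (Fin d) ℂ :=
  Matrix.of fun i j => if ∃ lam, i ∈ K lam ∧ j ∈ K lam then M i j else 0

open Function

section Generic

variable {ι κ μ : Type*}

theorem quotQ_quotQ [DecidableEq ι] (N : Matrix ι ι ℂ) {D : κ → Finset ι}
    (hD : Pairwise (Disjoint on D)) {E : μ → Finset κ} (hE : Pairwise (Disjoint on E)) :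
    quotQ (quotQ N D) E = quotQ N fun c => (E c).biUnion D := by
  ext c c'
  simp only [quotQ, Matrix.of_apply]
  split_ifs with hcc
  · rfl
  have hne : ∀ a ∈ E c, ∀ b ∈ E c', a ≠ b := fun a ha b hb hab =>
    Finset.disjoint_left.mp (hE hcc) ha (hab ▸ hb)
  calc ∑ a ∈ E c, ∑ b ∈ E c', (if a = b then 0 else ∑ i ∈ D a, ∑ j ∈ D b, N i j)
      = ∑ a ∈ E c, ∑ b ∈ E c', ∑ i ∈ D a, ∑ j ∈ D b, N i j :=
        Finset.sum_congr rfl fun a ha => Finset.sum_congr rfl fun b hb => if_neg (hne a ha b hb)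
    _ = ∑ a ∈ E c, ∑ i ∈ D a, ∑ b ∈ E c', ∑ j ∈ D b, N i j :=
        Finset.sum_congr rfl fun _ _ => Finset.sum_comm
    _ = ∑ i ∈ (E c).biUnion D, ∑ j ∈ (E c').biUnion D, N i j := by
        simp only [Finset.sum_biUnion (hD.set_pairwise _)]

theorem quotQ_of_ite (N : Matrix ι ι ℂ) (D : κ → Finset ι) {p : ι → ι → Prop}
    {q : κ → κ → Prop} [DecidableRel p] [DecidableRel q]
    (hpq : ∀ a b, a ≠ b → ∀ i ∈ D a, ∀ j ∈ D b, (p i j ↔ q a b)) :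
    quotQ (Matrix.of fun i j => if p i j then N i j else 0) D
      = Matrix.of fun a b => if q a b then quotQ N D a b else 0 := by
  ext a b
  simp only [quotQ, Matrix.of_apply]
  split_ifs with hab hq hq
  · rfl
  · rfl
  · exact Finset.sum_congr rfl fun i hi => Finset.sum_congr rfl fun j hj =>
      if_pos ((hpq a b hab i hi j hj).mpr hq)
  · exact Finset.sum_eq_zero fun i hi => Finset.sum_eq_zero fun j hj =>
      if_neg fun hp => hq ((hpq a b hab i hi j hj).mp hp)

end Generic

section Partitions

variable {l m : ℕ}

/-- The partition `(K_λ)/(Iᵢ)` of the index set of `M/(Iᵢ)`, indexed like `M/(K_λ)`. -/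
def quotBlocks (I : Fin l → Finset (Fin d)) (K : Fin m → Finset (Fin d))
    (c : {j : Fin d // ∀ lam, j ∉ K lam} ⊕ Fin m) :
    Finset ({j : Fin d // ∀ i, j ∉ I i} ⊕ Fin l) :=
  Finset.univ.filter fun a => blkFam I a ⊆ blkFam K c

theorem exists_mem_blkFam (I : Fin l → Finset (Fin d)) (x : Fin d) : ∃ a, x ∈ blkFam I a := by
  by_cases h : ∃ i, x ∈ I i
  · obtain ⟨i, hi⟩ := h
    exact ⟨Sum.inr i, hi⟩
  · rw [not_exists] at h
    exact ⟨Sum.inl ⟨x, h⟩, Finset.mem_singleton_self x⟩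

theorem blkFam_nonempty {I : Fin l → Finset (Fin d)} (hI : ∀ i, (I i).Nonempty) :
    ∀ a, (blkFam I a).Nonempty
  | Sum.inl j => Finset.singleton_nonempty j.1
  | Sum.inr i => hI i

theorem pairwise_disjoint_blkFam {I : Fin l → Finset (Fin d)}
    (hI : Pairwise (Disjoint on I)) : Pairwise (Disjoint on (blkFam I))
  | Sum.inl _, Sum.inl _, hne => Finset.disjoint_singleton.mpr fun h =>
      hne (congrArg Sum.inl (Subtype.ext h))
  | Sum.inl j, Sum.inr i, _ => Finset.disjoint_singleton_left.mpr (j.2 i)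
  | Sum.inr i, Sum.inl j, _ => Finset.disjoint_singleton_right.mpr (j.2 i)
  | Sum.inr _, Sum.inr _, hne => hI fun h => hne (congrArg Sum.inr h)

variable {I : Fin l → Finset (Fin d)} {K : Fin m → Finset (Fin d)}

theorem blkFam_subset_of_mem (hK : Pairwise (Disjoint on K)) (hIK : ∀ i, ∃ lam, I i ⊆ K lam)
    {a : {j : Fin d // ∀ i, j ∉ I i} ⊕ Fin l}
    {c : {j : Fin d // ∀ lam, j ∉ K lam} ⊕ Fin m}
    {x : Fin d} (hxa : x ∈ blkFam I a) (hxc : x ∈ blkFam K c) :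
    blkFam I a ⊆ blkFam K c := by
  cases a with
  | inl j =>
    rw [blkFam, Finset.mem_singleton] at hxa
    simpa [blkFam, ← hxa] using hxc
  | inr i =>
    obtain ⟨lam, hlam⟩ := hIK i
    have hx : x ∈ K lam := hlam hxa
    cases c with
    | inl j => exact absurd ((Finset.mem_singleton.mp hxc) ▸ hx) (j.2 lam)
    | inr mu =>
      obtain rfl : lam = mu := by
        by_contra h
        exact Finset.disjoint_left.mp (hK h) hx hxc
      exact hlam

theorem biUnion_quotBlocks (hK : Pairwise (Disjoint on K)) (hIK : ∀ i, ∃ lam, I i ⊆ K lam)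
    (c : {j : Fin d // ∀ lam, j ∉ K lam} ⊕ Fin m) :
    (quotBlocks I K c).biUnion (blkFam I) = blkFam K c := by
  ext x
  simp only [quotBlocks, Finset.mem_biUnion, Finset.mem_filter, Finset.mem_univ, true_and]
  constructor
  · rintro ⟨a, hsub, hx⟩
    exact hsub hx
  · intro hx
    obtain ⟨a, ha⟩ := exists_mem_blkFam I x
    exact ⟨a, blkFam_subset_of_mem hK hIK ha hx, ha⟩

theorem pairwise_disjoint_quotBlocks (hI : ∀ i, (I i).Nonempty)
    (hK : Pairwise (Disjoint on K)) :
    Pairwise (Disjoint on (quotBlocks I K)) := by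
  intro c c' hcc
  refine Finset.disjoint_left.mpr fun a ha ha' => ?_
  simp only [quotBlocks, Finset.mem_filter, Finset.mem_univ, true_and] at ha ha'
  obtain ⟨x, hx⟩ := blkFam_nonempty hI a
  exact Finset.disjoint_left.mp (pairwise_disjoint_blkFam hK hcc) (ha hx) (ha' hx)

theorem exists_mem_K_iff_exists_mem_quotBlocks (hI : Pairwise (Disjoint on I))
    (hK : Pairwise (Disjoint on K)) (hIK : ∀ i, ∃ lam, I i ⊆ K lam)
    {a b : {j : Fin d // ∀ i, j ∉ I i} ⊕ Fin l} (hab : a ≠ b) {i j : Fin d}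
    (hi : i ∈ blkFam I a) (hj : j ∈ blkFam I b) :
    (∃ lam, i ∈ K lam ∧ j ∈ K lam) ↔
      ∃ c, a ∈ quotBlocks I K c ∧ b ∈ quotBlocks I K c := by
  simp only [quotBlocks, Finset.mem_filter, Finset.mem_univ, true_and]
  constructor
  · rintro ⟨lam, hiK, hjK⟩
    exact ⟨Sum.inr lam, blkFam_subset_of_mem hK hIK hi hiK, blkFam_subset_of_mem hK hIK hj hjK⟩
  · rintro ⟨c, hac, hbc⟩
    cases c with
    | inl k =>
      have hik : i = k := Finset.mem_singleton.mp (hac hi)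
      have hjk : j = k := Finset.mem_singleton.mp (hbc hj)
      exact absurd (hik.trans hjk.symm ▸ hi)
        (Finset.disjoint_right.mp (pairwise_disjoint_blkFam hI hab) hj)
    | inr lam => exact ⟨lam, hac hi, hbc hj⟩

end Partitions

theorem matrix_quotient_of_quotient_general {l m : ℕ}
    (M : Matrix (Fin d) (Fin d) ℂ)
    (I : Fin l → Finset (Fin d)) (K : Fin m → Finset (Fin d))
    (hI1 : ∀ i, 1 < (I i).card)
    (hId : ∀ i j, i ≠ j → Disjoint (I i) (I j))
    (hKd : ∀ a b, a ≠ b → Disjoint (K a) (K b))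
    (hIK : ∀ i, ∃ lam, I i ⊆ K lam) :
    quotQ (quotQ M (blkFam I))
        (fun c : ({j : Fin d // ∀ lam, j ∉ K lam} ⊕ Fin m) =>
          Finset.univ.filter (fun a => blkFam I a ⊆ blkFam K c))
      = quotQ M (blkFam K) ∧
    (Matrix.of fun a b =>
        if ∃ c : ({j : Fin d // ∀ lam, j ∉ K lam} ⊕ Fin m),
            a ∈ Finset.univ.filter (fun a' => blkFam I a' ⊆ blkFam K c) ∧
            b ∈ Finset.univ.filter (fun a' => blkFam I a' ⊆ blkFam K c)
          then quotQ M (blkFam I) a b else 0)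
      = quotQ (bdiag M K) (blkFam I) := by
  have hI : ∀ i, (I i).Nonempty := fun i => Finset.card_pos.mp (zero_lt_one.trans (hI1 i))
  constructor
  · exact (quotQ_quotQ M (pairwise_disjoint_blkFam hId)
      (pairwise_disjoint_quotBlocks hI hKd)).trans
      (congrArg (quotQ M) (funext (biUnion_quotBlocks hKd hIK)))
  · exact (quotQ_of_ite M (blkFam I) fun a b hab i hi j hj =>
      exists_mem_K_iff_exists_mem_quotBlocks hId hKd hIK hab hi hj).symm

/-- Proposition 5.1: let `M ∈ gl(d,ℂ)₀` and `(Iᵢ) ⊆ (K_λ)` partitions in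
`{1,…,d}` with blocks of size `> 1`, every `Iᵢ` inside some `K_λ`.  With
`(J_j) = (K_λ)/(Iᵢ)` (encoded as grouping the quotient indices of `M/(Iᵢ)` according to the
blocks `K_λ`), one has `(M/(Iᵢ))/(J_j) = M/(K_λ)` and `(M/(Iᵢ))_{(J_j)} = M_{(K_λ)}/(Iᵢ)`. -/
theorem matrix_quotient_of_quotient {l m : ℕ}
    (M : Matrix (Fin d) (Fin d) ℂ) (hM : ∀ i, M i i = 0)
    (I : Fin l → Finset (Fin d)) (K : Fin m → Finset (Fin d))
    (hI1 : ∀ i, 1 < (I i).card) (hK1 : ∀ lam, 1 < (K lam).card)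
    (hId : ∀ i j, i ≠ j → Disjoint (I i) (I j))
    (hKd : ∀ a b, a ≠ b → Disjoint (K a) (K b))
    (hIK : ∀ i, ∃ lam, I i ⊆ K lam) :
    quotQ (quotQ M (blkFam I))
        (fun c : ({j : Fin d // ∀ lam, j ∉ K lam} ⊕ Fin m) =>
          Finset.univ.filter (fun a => blkFam I a ⊆ blkFam K c))
      = quotQ M (blkFam K) ∧
    (Matrix.of fun a b =>
        if ∃ c : ({j : Fin d // ∀ lam, j ∉ K lam} ⊕ Fin m),
            a ∈ Finset.univ.filter (fun a' => blkFam I a' ⊆ blkFam K c) ∧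
            b ∈ Finset.univ.filter (fun a' => blkFam I a' ⊆ blkFam K c)
          then quotQ M (blkFam I) a b else 0)
      = quotQ (bdiag M K) (blkFam I) :=
  matrix_quotient_of_quotient_general M I K hI1 hId hKd hIK

end MatQuot
end
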